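/- arXiv:2108.11313 — 6 statements merged into one kernel-verified Lean document; each statement's English description precedes it below -/
import Mathlib

section
/- If x and y are conjugate words (i.e., x = uv and y = vu for some words u, v) over positive integers, then the cyclic regular continuant K^∘(x) equals K^∘(y), where K^∘(x_1 x_2 ... x_n) = K(x_1...x_n) + K(x_2...x_{n-1}). -/
def contKf {R : Type*} [Semiring R] : List R → R
  | [] => 1
  | [a] => a
  | a :: b :: l => a * contKf (b :: l) + contKf l

def contK {R : Type*} [Semiring R] (l : List R) : R := contKf l.reverse

def cycK {R : Type*} [Semiring R] (l : List R) : R := contK l + contK l.tail.dropLast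

def Mm (a : ℕ) : Matrix (Fin 2) (Fin 2) ℕ := !![a, 1; 1, 0]

lemma tail_dropLast' {α} (l : List α) : l.tail.dropLast = l.dropLast.tail := by
  induction l with
  | nil => rfl
  | cons a s ih =>
    cases s with
    | nil => rfl
    | cons b t => simp [List.dropLast_cons₂]

lemma prod_eq (r : List ℕ) (h : 2 ≤ r.length) :
    (r.map Mm).prod = !![contKf r, contKf r.dropLast; contKf r.tail, contKf r.tail.dropLast] := by
  induction r with
  | nil => simp at h
  | cons a s ih =>
    cases s with
    | nil => simp at h
    | cons b t =>
      cases t with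
      | nil =>
        ext i j
        fin_cases i <;> fin_cases j <;>
          simp [Mm, contKf, Matrix.mul_apply, Fin.sum_univ_succ]
      | cons c w =>
        have ih' := ih (by simp)
        rw [List.map_cons, List.prod_cons, ih']
        ext i j
        fin_cases i <;> fin_cases j <;>
          simp [Mm, contKf, Matrix.mul_apply, Fin.sum_univ_succ, List.dropLast_cons₂,
            tail_dropLast']

lemma cycK_eq_trace (l : List ℕ) (h : 2 ≤ l.length) :
    cycK l = Matrix.trace ((l.reverse.map Mm).prod) := by
  rw [prod_eq _ (by simpa using h)]
  simp [cycK, contK, Matrix.trace_fin_two, List.tail_reverse, List.dropLast_reverse,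
    tail_dropLast']

theorem stmt4 (u v : List ℕ) (hpos : ∀ i ∈ u ++ v, 0 < i)
    (hlen : 2 ≤ (u ++ v).length) :
    cycK (u ++ v) = cycK (v ++ u) := by
  rw [cycK_eq_trace _ hlen, cycK_eq_trace _ (by simpa [add_comm] using hlen)]
  simp only [List.reverse_append, List.map_append, List.prod_append]
  exact Matrix.trace_mul_comm _ _
end

section
/- Let u = u_1...u_m and v = v_1...v_n be nonempty words over positive integers. Then K^∘(u*v) − K^∘(uv) = ([u] − [u*])·([v] − [v*])·K(u)·K(v), where [w] denotes the value of the regular continued fraction [0; w_1,...,w_k], w* is the reversal of w, and K^∘ is the cyclic regular continuant. -/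
/-- Value of the regular continued fraction `[0; w₁,…,w_k] = K(w₂…w_k)/K(w₁…w_k)`. -/
def valCF (w : List ℕ) : ℚ := (contK w.tail : ℚ) / (contK w : ℚ)

open Matrix

section Continuant

variable {R : Type*}

lemma contKf_pos [Semiring R] [PartialOrder R] [IsStrictOrderedRing R] :
    ∀ l : List R, (∀ x ∈ l, 0 < x) → 0 < contKf l
  | [] => fun _ => by simp [contKf]
  | [a] => fun h => by simpa [contKf] using h
  | a :: b :: l => fun h => by
    have hbl := contKf_pos (b :: l) fun x hx => h x (List.mem_cons_of_mem a hx)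
    have hl := contKf_pos l fun x hx => h x (by simp [hx])
    have ha := h a (by simp)
    simp only [contKf]
    positivity

lemma contK_pos [Semiring R] [PartialOrder R] [IsStrictOrderedRing R] (l : List R)
    (h : ∀ x ∈ l, 0 < x) : 0 < contK l :=
  contKf_pos l.reverse fun x hx => h x (List.mem_reverse.mp hx)

variable [CommSemiring R]

def contMat (l : List R) : Matrix (Fin 2) (Fin 2) R :=
  (l.map fun a => !![a, 1; 1, 0]).prod

@[simp]
lemma contMat_nil : contMat ([] : List R) = 1 := rfl

@[simp]
lemma contMat_cons (a : R) (l : List R) : contMat (a :: l) = !![a, 1; 1, 0] * contMat l := by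
  simp [contMat]

lemma contMat_append (l₁ l₂ : List R) : contMat (l₁ ++ l₂) = contMat l₁ * contMat l₂ := by
  simp [contMat]

lemma contMat_transpose (l : List R) : (contMat l)ᵀ = contMat l.reverse := by
  induction l with
  | nil => simp
  | cons a l ih =>
    have hX : (!![a, 1; 1, 0] : Matrix (Fin 2) (Fin 2) R)ᵀ = !![a, 1; 1, 0] := by
      ext i j; fin_cases i <;> fin_cases j <;> rfl
    rw [contMat_cons, transpose_mul, hX, ih, List.reverse_cons, contMat_append]
    simp

lemma contMat_cons_apply_one_zero (a : R) (l : List R) : contMat (a :: l) 1 0 = contMat l 0 0 := by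
  simp [mul_apply, Fin.sum_univ_two]

lemma contMat_cons_apply_zero_zero (a : R) (l : List R) :
    contMat (a :: l) 0 0 = a * contMat l 0 0 + contMat l 1 0 := by
  simp [mul_apply, Fin.sum_univ_two]

lemma contMat_apply_zero_zero_eq_contKf : ∀ l : List R, contMat l 0 0 = contKf l
  | [] => by simp [contKf]
  | [a] => by simp [contMat_cons_apply_zero_zero, contKf]
  | a :: b :: l => by
    rw [contMat_cons_apply_zero_zero, contMat_cons_apply_one_zero,
      contMat_apply_zero_zero_eq_contKf (b :: l), contMat_apply_zero_zero_eq_contKf l, contKf]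

lemma contKf_reverse (l : List R) : contKf l.reverse = contKf l := by
  rw [← contMat_apply_zero_zero_eq_contKf, ← contMat_apply_zero_zero_eq_contKf,
    ← contMat_transpose, transpose_apply]

lemma contK_eq_contKf (l : List R) : contK l = contKf l := contKf_reverse l

lemma contK_reverse (l : List R) : contK l.reverse = contK l := by
  simp only [contK_eq_contKf, contKf_reverse]

lemma contMat_apply_zero_zero (l : List R) : contMat l 0 0 = contK l := by
  rw [contMat_apply_zero_zero_eq_contKf, contK_eq_contKf]

lemma contMat_apply_one_zero {l : List R} (hl : l ≠ []) : contMat l 1 0 = contK l.tail := by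
  obtain ⟨a, l, rfl⟩ := List.exists_cons_of_ne_nil hl
  rw [contMat_cons_apply_one_zero, contMat_apply_zero_zero, List.tail_cons]

lemma contMat_apply_zero_one {l : List R} (hl : l ≠ []) : contMat l 0 1 = contK l.dropLast := by
  have h := contMat_apply_one_zero (List.reverse_ne_nil_iff.mpr hl)
  rwa [← contMat_transpose, transpose_apply, List.tail_reverse, contK_reverse] at h

lemma contMat_apply_one_one {l : List R} (hl : 1 < l.length) :
    contMat l 1 1 = contK l.tail.dropLast := by
  obtain _ | ⟨a, l⟩ := l
  · simp at hl
  have hl' : l ≠ [] := List.ne_nil_of_length_pos (by simp at hl; omega)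
  have hrow : contMat (a :: l) 1 1 = contMat l 0 1 := by simp [mul_apply, Fin.sum_univ_two]
  rw [hrow, contMat_apply_zero_one hl', List.tail_cons]

lemma cycK_eq_trace_contMat {l : List R} (hl : 1 < l.length) : cycK l = (contMat l).trace := by
  rw [trace_fin_two, contMat_apply_zero_zero, contMat_apply_one_one hl, cycK]

end Continuant

lemma Matrix.trace_transpose_mul_sub_trace_mul_fin_two {R : Type*} [CommRing R]
    (M N : Matrix (Fin 2) (Fin 2) R) :
    (Mᵀ * N).trace - (M * N).trace = (M 1 0 - M 0 1) * (N 1 0 - N 0 1) := by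
  simp only [trace_fin_two, mul_apply, Fin.sum_univ_two, transpose_apply]
  ring

theorem cycK_reverse_append_sub_cycK_append {R : Type*} [CommRing R] {u v : List R}
    (hu : u ≠ []) (hv : v ≠ []) :
    cycK (u.reverse ++ v) - cycK (u ++ v) =
      (contK u.tail - contK u.dropLast) * (contK v.tail - contK v.dropLast) := by
  have hlen : 1 < u.length + v.length := by
    have := List.length_pos_of_ne_nil hu; have := List.length_pos_of_ne_nil hv; omega
  rw [cycK_eq_trace_contMat (by simpa using hlen), cycK_eq_trace_contMat (by simpa using hlen),
    contMat_append, contMat_append, ← contMat_transpose,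
    trace_transpose_mul_sub_trace_mul_fin_two, contMat_apply_one_zero hu,
    contMat_apply_zero_one hu, contMat_apply_one_zero hv, contMat_apply_zero_one hv]

lemma coe_natList_eq_map (l : List ℕ) : (↑l : List ℚ) = l.map Nat.cast :=
  List.flatMap_pure_eq_map _ l

lemma valCF_sub_valCF_reverse_mul_contK {w : List ℕ} (hpos : ∀ i ∈ w, 0 < i) :
    (valCF w - valCF w.reverse) * contK (w.map Nat.cast : List ℚ) =
      contK (w.map Nat.cast : List ℚ).tail - contK (w.map Nat.cast : List ℚ).dropLast := by
  have hK : contK (w.map Nat.cast : List ℚ) ≠ 0 :=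
    (contK_pos _ fun x hx => by
      obtain ⟨i, hi, rfl⟩ := List.mem_map.mp hx
      exact_mod_cast hpos i hi).ne'
  simp only [valCF, coe_natList_eq_map, List.map_tail, List.map_reverse, contK_reverse,
    List.tail_reverse, List.map_dropLast]
  field_simp

theorem stmt6 (u v : List ℕ) (hu : u ≠ []) (hv : v ≠ [])
    (hpos : ∀ i ∈ u ++ v, 0 < i) :
    (cycK (u.reverse ++ v) : ℚ) - (cycK (u ++ v) : ℚ) =
      (valCF u - valCF u.reverse) * (valCF v - valCF v.reverse) *
        (contK u : ℚ) * (contK v : ℚ) := by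
  simp only [coe_natList_eq_map, List.map_append, List.map_reverse]
  rw [cycK_reverse_append_sub_cycK_append (by simpa using hu) (by simpa using hv),
    ← valCF_sub_valCF_reverse_mul_contK fun i hi => hpos i (List.mem_append_left v hi),
    ← valCF_sub_valCF_reverse_mul_contK fun i hi => hpos i (List.mem_append_right u hi)]
  ring
end

section
/- Let ω be a cyclic word over an ordered alphabet A such that every factorization ω = uv into nonempty non-palindromes u, v is alt-synchronizing, let a be the smallest letter occurring in ω, and d the largest letter occurring in ω, with a ≠ d. Then either every cyclic occurrence of a in ω is immediately followed by d, or every cyclic occurrence of d in ω is immediately followed by a. -/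
/-- The lexicographic order on words induced by the order of the alphabet, with the
convention that `u ≺ v` whenever `v` is a proper prefix of `u`. -/
def wlt {A : Type*} [LinearOrder A] (u v : List A) : Prop :=
  (v ≠ u ∧ v <+: u) ∨
    ∃ (p s t : List A) (x y : A), x < y ∧ u = p ++ x :: s ∧ v = p ++ y :: t

/-- The alternating lexicographic order on words: at the first difference, the order of
letters is used at even (0-based) positions and reversed at odd positions; if `v` is a
proper prefix of `u` then `u ≺_alt v` when `|v|` is even and `v ≺_alt u` when `|v|` is odd. -/
def altlt {A : Type*} [LinearOrder A] (u v : List A) : Prop :=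
  (v ≠ u ∧ v <+: u ∧ Even v.length) ∨ (u ≠ v ∧ u <+: v ∧ Odd u.length) ∨
    ∃ (p s t : List A) (x y : A), u = p ++ x :: s ∧ v = p ++ y :: t ∧
      ((Even p.length ∧ x < y) ∨ (Odd p.length ∧ y < x))

/-- `r` is a linear representation (rotation) of the cyclic word represented by `w`. -/
def isRot {A : Type*} (w r : List A) : Prop := ∃ s t : List A, w = s ++ t ∧ r = t ++ s

/-- `f` is a factor of the cyclic word represented by `w`. -/
def isCFactor {A : Type*} (f w : List A) : Prop := ∃ r : List A, isRot w r ∧ f <:+: r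

/-- The cyclic word represented by `w` is singular: every factorization of it into two
nonempty non-palindromes `u`, `v` is synchronizing (`u ≺ u*` iff `v ≺ v*`). -/
def cyclicSingular {A : Type*} [LinearOrder A] (w : List A) : Prop :=
  ∀ u v : List A, u ≠ [] → v ≠ [] → isRot w (u ++ v) →
    u ≠ u.reverse → v ≠ v.reverse → (wlt u u.reverse ↔ wlt v v.reverse)

/-- `δ_b(w) = Σ_{c>b} |w|_c − Σ_{a<b} |w|_a`. -/
def deltaW {A : Type*} [LinearOrder A] [Fintype A] (w : List A) (b : A) : ℤ :=
  (∑ c ∈ Finset.univ.filter (fun c => b < c), (w.count c : ℤ)) -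
    (∑ a ∈ Finset.univ.filter (fun a => a < b), (w.count a : ℤ))

lemma isRot_symm {A : Type*} {w r : List A} (h : isRot w r) : isRot r w := by
  obtain ⟨s, t, rfl, rfl⟩ := h; exact ⟨t, s, rfl, rfl⟩

lemma isRot_trans {A : Type*} {w r q : List A} (h1 : isRot w r) (h2 : isRot r q) : isRot w q := by
  obtain ⟨s, t, rfl, rfl⟩ := h1
  obtain ⟨s', t', he, rfl⟩ := h2
  rcases List.append_eq_append_iff.mp he with ⟨x, hx1, hx2⟩ | ⟨x, hx1, hx2⟩
  · subst hx1; subst hx2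
    exact ⟨x, t' ++ t, by simp, by simp⟩
  · subst hx1; subst hx2
    exact ⟨s ++ s', x, by simp, by simp⟩

lemma isRot_mem {A : Type*} {w r : List A} (h : isRot w r) {z : A} (hz : z ∈ r) : z ∈ w := by
  obtain ⟨s, t, rfl, rfl⟩ := h
  simp only [List.mem_append] at hz ⊢
  tauto

lemma rev_eq_aux {A : Type*} (x y : A) (m : List A) :
    (x :: (m ++ [y])).reverse = y :: (m.reverse ++ [x]) := by simp

lemma ne_rev_aux {A : Type*} [LinearOrder A] {x y : A} (m : List A) (h : x ≠ y) :
    x :: (m ++ [y]) ≠ (x :: (m ++ [y])).reverse := by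
  rw [rev_eq_aux]; intro he; exact h (List.cons.injEq _ _ _ _ ▸ he).1

lemma altlt_of_first_lt_last {A : Type*} [LinearOrder A] {x y : A} (m : List A) (h : x < y) :
    altlt (x :: (m ++ [y])) (x :: (m ++ [y])).reverse := by
  rw [rev_eq_aux]
  exact Or.inr (Or.inr ⟨[], m ++ [y], m.reverse ++ [x], x, y, rfl, rfl,
    Or.inl ⟨by simp, h⟩⟩)

lemma not_altlt_of_last_lt_first {A : Type*} [LinearOrder A] {x y : A} (m : List A)
    (h : y < x) : ¬ altlt (x :: (m ++ [y])) (x :: (m ++ [y])).reverse := by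
  rw [rev_eq_aux]
  rintro (⟨hne, hpre, -⟩ | ⟨hne, hpre, -⟩ | ⟨p, s, t, z, z', h1, h2, h3⟩)
  · exact hne (hpre.eq_of_length (by simp))
  · exact hne (hpre.eq_of_length (by simp))
  · cases p with
    | nil =>
      simp only [List.nil_append] at h1 h2
      obtain ⟨rfl, -⟩ := List.cons.injEq _ _ _ _ ▸ h1
      obtain ⟨rfl, -⟩ := List.cons.injEq _ _ _ _ ▸ h2
      rcases h3 with ⟨-, hlt⟩ | ⟨hodd, -⟩
      · exact absurd hlt (lt_asymm h)
      · simp at hodd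
    | cons hd tl =>
      simp only [List.cons_append] at h1 h2
      obtain ⟨rfl, -⟩ := List.cons.injEq _ _ _ _ ▸ h1
      obtain ⟨he, -⟩ := List.cons.injEq _ _ _ _ ▸ h2
      exact absurd (he ▸ h) (lt_irrefl _)

theorem stmt9 {A : Type*} [LinearOrder A] (w : List A) (a d : A)
    (hsync : ∀ u v : List A, u ≠ [] → v ≠ [] → isRot w (u ++ v) →
      u ≠ u.reverse → v ≠ v.reverse → (altlt u u.reverse ↔ altlt v v.reverse))
    (ha : a ∈ w) (hd : d ∈ w)
    (hmin : ∀ x ∈ w, a ≤ x) (hmax : ∀ x ∈ w, x ≤ d) (hne : a ≠ d) :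
    (∀ c : A, isCFactor [a, c] w → c = d) ∨ (∀ c : A, isCFactor [d, c] w → c = a) := by
  by_contra hcon
  push_neg at hcon
  obtain ⟨⟨c, hc, hcd⟩, ⟨c', hc', hc'a⟩⟩ := hcon
  obtain ⟨r, hr, p, t, hpt⟩ := hc
  obtain ⟨r', hr', p', t', hpt'⟩ := hc'
  have hw1 : isRot w (a :: c :: (t ++ p)) := by
    refine isRot_trans hr ⟨p, [a, c] ++ t, ?_, by simp⟩
    rw [← hpt]; simp
  have hw2 : isRot w (d :: c' :: (t' ++ p')) := by
    refine isRot_trans hr' ⟨p', [d, c'] ++ t', ?_, by simp⟩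
    rw [← hpt']; simp
  -- memberships give strict inequalities
  have hcw : c ∈ w := isRot_mem hw1 (by simp)
  have hc'w : c' ∈ w := isRot_mem hw2 (by simp)
  have hcd_lt : c < d := lt_of_le_of_ne (hmax c hcw) hcd
  have hac' : a < c' := lt_of_le_of_ne (hmin c' hc'w) (Ne.symm hc'a)
  obtain ⟨x, y, hxy, hyx⟩ := isRot_trans (isRot_symm hw1) hw2
  cases y with
  | nil =>
    rw [List.append_nil] at hxy
    rw [List.nil_append] at hyx
    rw [← hxy] at hyx
    injection hyx with e1 e2
    exact hne e1.symm
  | cons y0 ytl =>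
    cases ytl with
    | nil =>
      simp only [List.cons_append, List.nil_append] at hyx
      injection hyx with e1 e2
      subst e1; subst e2
      simp only [List.cons_append] at hxy
      injection hxy with e3 e4
      exact hc'a e3.symm
    | cons y1 ytl2 =>
      simp only [List.cons_append] at hyx
      injection hyx with e1 e1'
      injection e1' with e2 e2'
      subst e1; subst e2
      cases x with
      | nil =>
        rw [List.nil_append] at hxy
        injection hxy with e3 e4
        exact hne e3
      | cons x0 xtl =>
        cases xtl with
        | nil =>
          simp only [List.cons_append, List.nil_append] at hxy
          injection hxy with e3 e3'
          injection e3' with e4 e4'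
          exact hcd e4
        | cons x1 xtl2 =>
          simp only [List.cons_append] at hxy
          injection hxy with e3 e3'
          injection e3' with e4 h3
          subst e3; subst e4
          -- now h3 : t ++ p = xtl2 ++ d :: c' :: ytl2
          set u : List A := c' :: (ytl2 ++ [a]) with hu
          set v : List A := c :: (xtl2 ++ [d]) with hv
          have hrot : isRot w (u ++ v) := by
            refine isRot_trans hw1 ⟨a :: c :: (xtl2 ++ [d]), c' :: ytl2, ?_, ?_⟩
            · rw [h3]; simp
            · simp [hu, hv]
          have hiff := hsync u v (by simp [hu]) (by simp [hv]) hrot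
            (ne_rev_aux _ (ne_of_gt hac')) (ne_rev_aux _ hcd)
          exact (not_altlt_of_last_lt_first _ hac')
            (hiff.mpr (altlt_of_first_lt_last _ hcd_lt))
end

section
/- Let ω be a cyclic word over an ordered alphabet A such that no factorization ω = uv into nonempty non-palindromes is synchronizing, and let j be the largest letter occurring in ω. Then all occurrences of j in ω are clustered together: ω admits a linear representation of the form j^N x with N ≥ 1 and x containing no occurrence of j. -/
/-!
If the largest letter `j` is not clustered, the cyclic word has two places where a letter
other than `j` is followed by `j`. Cutting it at both places gives a factorization `uv` in
which `u` and `v` both begin with `j` and end with a smaller letter. Then `u*` and `v*` begin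
with a letter smaller than `j`, so neither `u ≺ u*` nor `v ≺ v*`: the factorization is
synchronizing.
-/

open List

section

variable {A : Type*}

theorem isRot_iff_isRotated {w r : List A} : isRot w r ↔ w ~r r := by
  constructor
  · rintro ⟨s, t, rfl, rfl⟩
    exact isRotated_append
  · rintro ⟨n, rfl⟩
    exact ⟨_, _, (take_append_drop (n % w.length) w).symm, rotate_eq_drop_append_take_mod⟩

theorem not_wlt_cons_cons [LinearOrder A] {x y : A} (hyx : y < x) (s t : List A) :
    ¬ wlt (x :: s) (y :: t) := by
  rintro (⟨-, hpre⟩ | ⟨_ | ⟨a, p⟩, s', t', x', y', hxy, hu, hv⟩)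
  · exact hyx.ne (cons_prefix_cons.mp hpre).1
  · simp only [nil_append, cons.injEq] at hu hv
    exact (hu.1 ▸ hv.1 ▸ hyx).not_gt hxy
  · simp only [cons_append, cons.injEq] at hu hv
    exact hyx.ne (hv.1.trans hu.1.symm)

theorem ne_reverse_and_not_wlt_reverse [LinearOrder A] {j : A} {l : List A}
    (hhead : l.head? = some j) (hlast : l.getLast? ≠ some j) (hmax : ∀ x ∈ l, x ≤ j) :
    l ≠ l.reverse ∧ ¬ wlt l l.reverse := by
  obtain ⟨s, rfl⟩ := head?_eq_some_iff.mp hhead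
  obtain ⟨d, t, ht⟩ := exists_cons_of_ne_nil (reverse_ne_nil_iff.mpr (cons_ne_nil j s))
  have hd : (j :: s).getLast? = some d := by rw [← head?_reverse, ht, head?_cons]
  have hdj : d < j := (hmax d (mem_of_getLast? hd)).lt_of_ne fun h => hlast (h ▸ hd)
  rw [ht]
  exact ⟨fun h => hdj.ne (cons.inj h).1.symm, not_wlt_cons_cons hdj s t⟩

theorem exists_eq_append_cons_cons_of_ne {j c : A} {l : List A} (hcj : c ≠ j) (hj : j ∈ l) :
    ∃ p q d, d ≠ j ∧ c :: l = p ++ d :: j :: q := by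
  induction l generalizing c with
  | nil => cases hj
  | cons a l ih =>
    by_cases haj : a = j
    · exact ⟨[], l, c, hcj, by rw [haj, nil_append]⟩
    · obtain ⟨p, q, d, hdj, h⟩ := ih haj ((mem_cons.mp hj).resolve_left (Ne.symm haj))
      exact ⟨c :: p, q, d, hdj, by rw [h, cons_append]⟩

theorem exists_eq_replicate_append (l : List A) (j : A) :
    ∃ n t, l = replicate n j ++ t ∧ t.head? ≠ some j := by
  induction l with
  | nil => exact ⟨0, [], rfl, by simp⟩
  | cons a l ih =>
    by_cases haj : a = j
    · obtain ⟨n, t, h, ht⟩ := ih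
      exact ⟨n + 1, t, by rw [h, haj, replicate_succ, cons_append], ht⟩
    · exact ⟨0, a :: l, rfl, by simpa using haj⟩

theorem exists_isRotated_cons_getLast?_ne {w : List A} {j c : A} (hj : j ∈ w) (hc : c ∈ w)
    (hcj : c ≠ j) : ∃ m, w ~r j :: m ∧ (j :: m).getLast? ≠ some j := by
  obtain ⟨a, b, rfl⟩ := append_of_mem hc
  have hjba : j ∈ b ++ a := by simpa [Ne.symm hcj, or_comm] using hj
  obtain ⟨p, q, d, hdj, h⟩ := exists_eq_append_cons_cons_of_ne hcj hjba
  refine ⟨q ++ p ++ [d], ?_, ?_⟩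
  · have hcycle : c :: (b ++ a) = (p ++ [d]) ++ (j :: q) := by simp [h]
    have hrot : a ++ c :: b ~r c :: (b ++ a) := by simpa using isRotated_append (l' := c :: b)
    rw [hcycle] at hrot
    simpa using hrot.trans isRotated_append
  · rw [← cons_append, getLast?_concat]
    simpa using hdj

theorem exists_append_of_mem_of_head?_ne {j : A} {n : ℕ} {t : List A}
    (hlast : (replicate (n + 1) j ++ t).getLast? ≠ some j) (ht : t.head? ≠ some j)
    (hjt : j ∈ t) :
    ∃ u v, replicate (n + 1) j ++ t = u ++ v ∧ u.head? = some j ∧ u.getLast? ≠ some j ∧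
      v.head? = some j ∧ v.getLast? ≠ some j := by
  obtain ⟨e, t', rfl⟩ := exists_cons_of_ne_nil (ne_nil_of_mem hjt)
  have hej : e ≠ j := fun h => ht (h ▸ rfl)
  obtain ⟨p, q, d, hdj, h⟩ :=
    exists_eq_append_cons_cons_of_ne hej ((mem_cons.mp hjt).resolve_left (Ne.symm hej))
  have hsplit :
      replicate (n + 1) j ++ e :: t' = (replicate (n + 1) j ++ p ++ [d]) ++ j :: q := by
    simp [h]
  refine ⟨_, _, hsplit, by simp [replicate_succ], by simpa using hdj, rfl, ?_⟩
  rwa [hsplit, getLast?_append_of_ne_nil _ (cons_ne_nil j q)] at hlast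

end

theorem stmt10 {A : Type*} [LinearOrder A] (w : List A) (j : A)
    (hnosync : ∀ u v : List A, u ≠ [] → v ≠ [] → isRot w (u ++ v) →
      u ≠ u.reverse → v ≠ v.reverse → ¬ (wlt u u.reverse ↔ wlt v v.reverse))
    (hj : j ∈ w) (hmax : ∀ x ∈ w, x ≤ j) :
    ∃ (N : ℕ) (x : List A), 1 ≤ N ∧ isRot w (List.replicate N j ++ x) ∧ j ∉ x := by
  simp only [isRot_iff_isRotated] at hnosync ⊢
  by_cases hall : ∀ x ∈ w, x = j
  · refine ⟨w.length, [], length_pos_of_mem hj, ?_, not_mem_nil⟩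
    rw [append_nil, ← eq_replicate_of_mem hall]
  push Not at hall
  obtain ⟨c, hc, hcj⟩ := hall
  obtain ⟨m, hrot, hlast⟩ := exists_isRotated_cons_getLast?_ne hj hc hcj
  obtain ⟨n, t, hm, ht⟩ := exists_eq_replicate_append m j
  have hr : j :: m = replicate (n + 1) j ++ t := by rw [hm]; rfl
  rw [hr] at hrot hlast
  refine ⟨n + 1, t, n.succ_pos, hrot, fun hjt => ?_⟩
  obtain ⟨u, v, huv, hu, hu', hv, hv'⟩ := exists_append_of_mem_of_head?_ne hlast ht hjt
  rw [huv] at hrot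
  have hmax' : ∀ x ∈ u ++ v, x ≤ j := fun x hx => hmax x (hrot.mem_iff.mpr hx)
  obtain ⟨hu₁, hu₂⟩ :=
    ne_reverse_and_not_wlt_reverse hu hu' fun x hx => hmax' x (mem_append_left v hx)
  obtain ⟨hv₁, hv₂⟩ :=
    ne_reverse_and_not_wlt_reverse hv hv' fun x hx => hmax' x (mem_append_right u hx)
  exact hnosync u v (ne_nil_of_mem (mem_of_mem_head? hu)) (ne_nil_of_mem (mem_of_mem_head? hv))
    hrot hu₁ hv₁ (iff_of_false hu₂ hv₂)
end

section
/- Let v = (n_d)_{d∈A} be a nonzero vector of natural numbers indexed by a finite linearly ordered set A, and for each b ∈ A define δ_b = (Σ_{c>b} n_c) − (Σ_{a<b} n_a). Then exactly one of the following holds: (1) there is a single letter b with n_b > |δ_b| and n_d < |δ_d| for all other d; or (2) there exist letters a < c with n_a = |δ_a| > 0, n_c = |δ_c| > 0, n_b = |δ_b| = 0 for all b with a < b < c, and n_d < |δ_d| for all d < a and d > c. -/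
/-- `δ_b(v) = Σ_{c>b} n_c − Σ_{a<b} n_a` for a vector `v = (n_d)_{d∈A}`. -/
def deltaV {A : Type*} [LinearOrder A] [Fintype A] (v : A → ℕ) (b : A) : ℤ :=
  (∑ c ∈ Finset.univ.filter (fun c => b < c), (v c : ℤ)) -
    (∑ a ∈ Finset.univ.filter (fun a => a < b), (v a : ℤ))

namespace Stmt13Aux

variable {A : Type*} [LinearOrder A] [Fintype A]

/-- partial sum below `b` -/
def hsum (v : A → ℕ) (b : A) : ℤ := ∑ a ∈ Finset.univ.filter (fun a => a < b), (v a : ℤ)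

/-- total sum -/
def tsumV (v : A → ℕ) : ℤ := ∑ d, (v d : ℤ)

lemma hsum_nonneg (v : A → ℕ) (b : A) : 0 ≤ hsum v b :=
  Finset.sum_nonneg fun a _ => Int.natCast_nonneg _

lemma deltaV_eq (v : A → ℕ) (b : A) :
    deltaV v b = tsumV v - v b - 2 * hsum v b := by
  have h1 : (Finset.univ : Finset A).filter (fun c => ¬ c < b)
      = insert b (Finset.univ.filter (fun c => b < c)) := by
    ext x
    simp only [Finset.mem_filter, Finset.mem_univ, true_and, Finset.mem_insert, not_lt]
    constructor
    · intro hx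
      rcases eq_or_lt_of_le hx with h' | h'
      · exact Or.inl h'.symm
      · exact Or.inr h'
    · rintro (rfl | hx)
      · exact le_refl _
      · exact le_of_lt hx
  have h2 := Finset.sum_filter_add_sum_filter_not (Finset.univ : Finset A)
    (fun c => c < b) (fun c => (v c : ℤ))
  rw [h1, Finset.sum_insert (by simp)] at h2
  have h3 : hsum v b + ((v b : ℤ) + ∑ c ∈ Finset.univ.filter (fun c => b < c), (v c : ℤ))
      = tsumV v := h2
  unfold deltaV hsum
  unfold hsum at h3
  linarith

lemma hsum_mono (v : A → ℕ) {b b' : A} (hbb' : b < b') :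
    hsum v b + v b ≤ hsum v b' := by
  have hsub : insert b (Finset.univ.filter (fun a => a < b))
      ⊆ Finset.univ.filter (fun a => a < b') := by
    intro x hx
    simp only [Finset.mem_insert, Finset.mem_filter, Finset.mem_univ, true_and] at hx ⊢
    rcases hx with rfl | hx
    · exact hbb'
    · exact hx.trans hbb'
  have := Finset.sum_le_sum_of_subset_of_nonneg hsub
    (fun a _ _ => Int.natCast_nonneg (v a))
  rw [Finset.sum_insert (by simp)] at this
  unfold hsum
  linarith

lemma tsum_pos (v : A → ℕ) (hv : v ≠ 0) : 0 < tsumV v := by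
  obtain ⟨d0, hd0⟩ : ∃ d, v d ≠ 0 := by
    by_contra hcon; push_neg at hcon; exact hv (funext hcon)
  have h1 : (v d0 : ℤ) ≤ tsumV v :=
    Finset.single_le_sum (fun i _ => Int.natCast_nonneg (v i)) (Finset.mem_univ d0)
  have : 0 < (v d0 : ℤ) := by exact_mod_cast Nat.pos_of_ne_zero hd0
  linarith

lemma hsum_min (v : A → ℕ) {m : A} (hm : ∀ x, m ≤ x) : hsum v m = 0 := by
  unfold hsum
  apply Finset.sum_eq_zero
  intro a ha
  simp only [Finset.mem_filter, Finset.mem_univ, true_and] at ha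
  exact absurd (hm a) (not_le.mpr ha)

lemma hsum_max (v : A → ℕ) {M : A} (hM : ∀ x, x ≤ M) :
    hsum v M + v M = tsumV v := by
  have h1 : (Finset.univ : Finset A) = insert M (Finset.univ.filter (fun a => a < M)) := by
    ext x
    simp only [Finset.mem_insert, Finset.mem_filter, Finset.mem_univ, true_and]
    constructor
    · intro _
      rcases eq_or_lt_of_le (hM x) with h' | h'
      · exact Or.inl h'
      · exact Or.inr h'
    · intro _; trivial
  unfold tsumV
  rw [h1, Finset.sum_insert (by simp)]
  unfold hsum; ring

lemma hsum_succ (v : A → ℕ) {p c : A} (hpc : p < c) (hmax : ∀ x, x < c → x ≤ p) :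
    hsum v c = hsum v p + v p := by
  have h1 : (Finset.univ : Finset A).filter (fun a => a < c)
      = insert p (Finset.univ.filter (fun a => a < p)) := by
    ext x
    simp only [Finset.mem_filter, Finset.mem_univ, true_and, Finset.mem_insert]
    constructor
    · intro hx
      rcases eq_or_lt_of_le (hmax x hx) with h' | h'
      · exact Or.inl h'
      · exact Or.inr h'
    · rintro (rfl | hx)
      · exact hpc
      · exact hx.trans hpc
  unfold hsum
  rw [h1, Finset.sum_insert (by simp)]
  ring

end Stmt13Aux

open Stmt13Aux in
theorem stmt13 {A : Type*} [LinearOrder A] [Fintype A] (v : A → ℕ) (hv : v ≠ 0) :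
    Xor'
      (∃ b : A, (deltaV v b).natAbs < v b ∧ ∀ d : A, d ≠ b → v d < (deltaV v d).natAbs)
      (∃ a c : A, a < c ∧
        v a = (deltaV v a).natAbs ∧ 0 < v a ∧
        v c = (deltaV v c).natAbs ∧ 0 < v c ∧
        (∀ b : A, a < b → b < c → v b = 0 ∧ deltaV v b = 0) ∧
        (∀ d : A, d < a ∨ c < d → v d < (deltaV v d).natAbs)) := by
  classical
  have hexcl : ¬ ((∃ b : A, (deltaV v b).natAbs < v b ∧
        ∀ d : A, d ≠ b → v d < (deltaV v d).natAbs) ∧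
      (∃ a c : A, a < c ∧
        v a = (deltaV v a).natAbs ∧ 0 < v a ∧
        v c = (deltaV v c).natAbs ∧ 0 < v c ∧
        (∀ b : A, a < b → b < c → v b = 0 ∧ deltaV v b = 0) ∧
        (∀ d : A, d < a ∨ c < d → v d < (deltaV v d).natAbs))) := by
    rintro ⟨⟨b, hb1, hb2⟩, ⟨a, c, hac, ha1, ha2, hc1, hc2, _, _⟩⟩
    rcases eq_or_ne a b with rfl | hab
    · omega
    · have := hb2 a hab; omega
  have hS := tsum_pos v hv
  obtain ⟨d0, _⟩ : ∃ d, v d ≠ 0 := by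
    by_contra hcon; push_neg at hcon; exact hv (funext hcon)
  have hAne : (Finset.univ : Finset A).Nonempty := ⟨d0, Finset.mem_univ d0⟩
  set m : A := Finset.univ.min' hAne with hm
  set M : A := Finset.univ.max' hAne with hM
  have hmle : ∀ x : A, m ≤ x := fun x => Finset.min'_le _ x (Finset.mem_univ x)
  have hMle : ∀ x : A, x ≤ M := fun x => Finset.le_max' _ x (Finset.mem_univ x)
  have hvnn : ∀ x : A, (0:ℤ) ≤ v x := fun x => Int.natCast_nonneg _
  -- the "f > 0" set
  set T : Finset A := Finset.univ.filter (fun b => 0 < tsumV v - 2 * hsum v b) with hT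
  have hmT : m ∈ T := by
    simp only [hT, Finset.mem_filter, Finset.mem_univ, true_and, hsum_min v hmle]
    linarith
  have hTne : T.Nonempty := ⟨m, hmT⟩
  set bs : A := T.max' hTne with hbs
  have hbsf : 0 < tsumV v - 2 * hsum v bs :=
    (Finset.mem_filter.mp (T.max'_mem hTne)).2
  have hbsmax : ∀ x ∈ T, x ≤ bs := fun x hx => Finset.le_max' _ x hx
  -- g bs ≤ 0
  have hgle : tsumV v - 2 * (hsum v bs + v bs) ≤ 0 := by
    by_contra hcon
    push_neg at hcon
    rcases eq_or_lt_of_le (hMle bs) with hbsM | hbsM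
    · have := hsum_max v hMle
      rw [hbsM] at hcon
      linarith
    · have hBne : (Finset.univ.filter (fun x => bs < x)).Nonempty :=
        ⟨M, by simp [hbsM]⟩
      set b' : A := (Finset.univ.filter (fun x => bs < x)).min' hBne with hb'
      have hbsb' : bs < b' :=
        (Finset.mem_filter.mp ((Finset.univ.filter (fun x => bs < x)).min'_mem hBne)).2
      have hmaxlt : ∀ x, x < b' → x ≤ bs := by
        intro x hx
        by_contra hcx
        push_neg at hcx
        have : b' ≤ x := Finset.min'_le _ x (by simp [hcx])
        exact absurd hx (not_lt.mpr this)
      have hsucc := hsum_succ v hbsb' hmaxlt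
      have : b' ∈ T := by
        simp only [hT, Finset.mem_filter, Finset.mem_univ, true_and, hsucc]
        linarith
      exact absurd (hbsmax b' this) (not_le.mpr hbsb')
  have hmain : (∃ b : A, (deltaV v b).natAbs < v b ∧
        ∀ d : A, d ≠ b → v d < (deltaV v d).natAbs) ∨
      (∃ a c : A, a < c ∧
        v a = (deltaV v a).natAbs ∧ 0 < v a ∧
        v c = (deltaV v c).natAbs ∧ 0 < v c ∧
        (∀ b : A, a < b → b < c → v b = 0 ∧ deltaV v b = 0) ∧
        (∀ d : A, d < a ∨ c < d → v d < (deltaV v d).natAbs)) := by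
    rcases eq_or_lt_of_le hgle with hgeq | hglt
    · -- case (2): g bs = 0, a := bs
      right
      set U : Finset A := Finset.univ.filter
        (fun b => tsumV v - 2 * (hsum v b + v b) < 0) with hU
      have hMU : M ∈ U := by
        have := hsum_max v hMle
        simp only [hU, Finset.mem_filter, Finset.mem_univ, true_and]
        linarith
      have hUne : U.Nonempty := ⟨M, hMU⟩
      set c : A := U.min' hUne with hc
      have hcg : tsumV v - 2 * (hsum v c + v c) < 0 :=
        (Finset.mem_filter.mp (U.min'_mem hUne)).2
      have hnotU : ∀ x, x < c → 0 ≤ tsumV v - 2 * (hsum v x + v x) := by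
        intro x hx
        by_contra hcx
        push_neg at hcx
        have : c ≤ x := Finset.min'_le _ x
          (by simp only [hU, Finset.mem_filter, Finset.mem_univ, true_and]; linarith)
        exact absurd hx (not_lt.mpr this)
      have hac : bs < c := by
        rcases lt_trichotomy bs c with h1 | h1 | h1
        · exact h1
        · rw [h1] at hgeq; linarith
        · have := hsum_mono v h1
          linarith [hvnn bs]
      -- f c = 0
      have hfc : tsumV v - 2 * hsum v c = 0 := by
        have hle1 : tsumV v - 2 * hsum v c ≤ 0 := by
          have := hsum_mono v hac
          linarith
        have hPne : (Finset.univ.filter (fun x => x < c)).Nonempty :=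
          ⟨bs, by simp [hac]⟩
        set p : A := (Finset.univ.filter (fun x => x < c)).max' hPne with hp
        have hpc : p < c :=
          (Finset.mem_filter.mp ((Finset.univ.filter (fun x => x < c)).max'_mem hPne)).2
        have hmaxlt : ∀ x, x < c → x ≤ p := fun x hx =>
          Finset.le_max' _ x (by simp [hx])
        have hsucc := hsum_succ v hpc hmaxlt
        have := hnotU p hpc
        linarith
      refine ⟨bs, c, hac, ?_, ?_, ?_, ?_, ?_, ?_⟩
      · rw [deltaV_eq]; omega
      · omega
      · rw [deltaV_eq]; omega
      · omega
      · intro b hab hbc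
        have h1 : tsumV v - 2 * hsum v b ≤ 0 := by
          have := hsum_mono v hab
          linarith
        have h2 := hnotU b hbc
        have h3 := hvnn b
        rw [deltaV_eq]
        exact ⟨by omega, by omega⟩
      · intro d hd
        rcases hd with hd | hd
        · have h1 := hsum_mono v hd
          rw [deltaV_eq]
          omega
        · have h1 := hsum_mono v hd
          rw [deltaV_eq]
          omega
    · -- case (1): g bs < 0 < f bs
      left
      refine ⟨bs, ?_, ?_⟩
      · rw [deltaV_eq]; omega
      · intro d hd
        rcases lt_trichotomy d bs with h1 | h1 | h1
        · have := hsum_mono v h1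
          rw [deltaV_eq]
          omega
        · exact absurd h1 hd
        · have h2 := hsum_mono v h1
          rw [deltaV_eq]
          omega
  rcases hmain with hP | hQ
  · exact Or.inl ⟨hP, fun hQ => hexcl ⟨hP, hQ⟩⟩
  · exact Or.inr ⟨hQ, fun hP => hexcl ⟨hP, hQ⟩⟩
end

section
/- Let ω be a cyclic singular word over a finite ordered alphabet A and b ∈ A with δ_b(ω) > 0. Then for any letters d, d' ≤ b with (d,d') ≠ (b,b), the word dd' does not occur as a factor of the cyclic word ω. -/
/-!
Cut the cyclic word just after the factor `d d'`, giving a linear representative `d' ⋯ d`.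
If some adjacent pair `x y` of it had `d' < x` and `d < y`, the factorization
`u = d' ⋯ x`, `v = y ⋯ d` would have `u ≺ u*` but `v* ≺ v`, against singularity. So every
adjacent pair satisfies `x ≤ d'` or `y ≤ d`. If `d < b`, every letter above `b` is then followed
by a letter below `b`; if `d' < b`, every letter above `b` is preceded by one below `b`. Either
way there are at least as many letters below `b` as above it, i.e. `δ_b(ω) ≤ 0`.
-/

namespace List

variable {α : Type*} {p q : α → Bool}

theorem countP_le_countP_tail_of_isChain {l : List α} (hl : l.IsChain fun x y => p x → q y)
    (hlast : ∀ x ∈ l.getLast?, p x = false) : l.countP p ≤ l.tail.countP q := by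
  induction hl with
  | nil => simp
  | singleton a => simp_all
  | @cons_cons a b l hab _ ih =>
    rw [getLast?_cons_cons] at hlast
    have ih : (b :: l).countP p ≤ l.countP q := ih hlast
    rw [countP_cons, tail_cons, countP_cons (p := q)]
    split_ifs with hpa hqb
    · omega
    · exact absurd (hab hpa) hqb
    all_goals omega

theorem countP_le_countP_of_isChain {l : List α} (hl : l.IsChain fun x y => p x → q y)
    (hlast : ∀ x ∈ l.getLast?, p x = false) : l.countP p ≤ l.countP q :=
  (countP_le_countP_tail_of_isChain hl hlast).trans (tail_sublist l).countP_le

theorem countP_le_countP_of_isChain_flip {l : List α} (hl : l.IsChain fun x y => p y → q x)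
    (hhead : ∀ x ∈ l.head?, p x = false) : l.countP p ≤ l.countP q := by
  rw [← countP_reverse, ← countP_reverse (p := q)]
  exact countP_le_countP_of_isChain (isChain_reverse.mpr hl) (by rwa [getLast?_reverse])

end List

section CyclicWords

variable {A : Type*}

theorem exists_isRotated_of_isCFactor_pair {a c : A} {w : List A} (h : isCFactor [a, c] w) :
    ∃ m, w.IsRotated (c :: m ++ [a]) := by
  obtain ⟨r, ⟨s, t, rfl, rfl⟩, p, q, hpq⟩ := h
  refine ⟨q ++ p, List.isRotated_append.trans ?_⟩
  rw [← hpq]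
  convert List.isRotated_append (l := p ++ [a]) (l' := c :: q) using 1 <;> simp

theorem isRot_of_isRotated {w r : List A} (h : w.IsRotated r) : isRot w r := by
  obtain ⟨n, rfl⟩ := h
  rcases eq_or_ne w [] with rfl | hw
  · exact ⟨[], [], rfl, by simp⟩
  · have hn : n % w.length ≤ w.length := (Nat.mod_lt _ (List.length_pos_iff.mpr hw)).le
    refine ⟨w.take (n % w.length), w.drop (n % w.length), (List.take_append_drop _ _).symm, ?_⟩
    rw [← List.rotate_mod, List.rotate_eq_drop_append_take hn]

theorem sum_count_filter_univ_eq_countP [DecidableEq A] [Fintype A] (P : A → Prop)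
    [DecidablePred P] (w : List A) :
    ∑ c ∈ Finset.univ.filter P, w.count c = w.countP (P ·) := by
  rw [← Finset.sum_filter_count_eq_countP]
  refine (Finset.sum_subset (Finset.filter_subset_filter _ (Finset.subset_univ _)) ?_).symm
  intro c hPc hc
  exact List.count_eq_zero.mpr fun hcw => hc (by simp [hcw, (Finset.mem_filter.mp hPc).2])

variable [LinearOrder A]

theorem deltaW_eq_countP_sub_countP [Fintype A] (w : List A) (b : A) :
    deltaW w b = (w.countP (b < ·) : ℤ) - w.countP (· < b) := by
  simp only [deltaW, ← Nat.cast_sum, sum_count_filter_univ_eq_countP]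

theorem wlt_cons_cons_of_lt {a c : A} (s t : List A) (h : a < c) : wlt (a :: s) (c :: t) :=
  Or.inr ⟨[], s, t, a, c, h, rfl, rfl⟩

theorem not_wlt_cons_cons_of_lt {a c : A} {s t : List A} (h : c < a) :
    ¬ wlt (a :: s) (c :: t) := by
  rintro (⟨-, hpre⟩ | ⟨_ | ⟨z, p⟩, s', t', x, y, hxy, hu, hv⟩)
  · exact h.ne (List.cons_prefix_cons.mp hpre).1
  · simp only [List.nil_append, List.cons.injEq] at hu hv
    exact hxy.asymm (hu.1 ▸ hv.1 ▸ h)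
  · simp only [List.cons_append, List.cons.injEq] at hu hv
    exact h.ne (hv.1.trans hu.1.symm)

theorem cyclicSingular.not_isRotated {w : List A} (hs : cyclicSingular w) {a x y c : A}
    (s t : List A) (hax : a < x) (hcy : c < y) :
    ¬ w.IsRotated (a :: (s ++ [x]) ++ y :: (t ++ [c])) := by
  intro hrot
  have hu : (a :: (s ++ [x])).reverse = x :: (s.reverse ++ [a]) := by simp
  have hv : (y :: (t ++ [c])).reverse = c :: (t.reverse ++ [y]) := by simp
  refine not_wlt_cons_cons_of_lt hcy (hv ▸ (hs _ _ (List.cons_ne_nil _ _) (List.cons_ne_nil _ _)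
    (isRot_of_isRotated hrot) ?_ ?_).mp (hu ▸ wlt_cons_cons_of_lt _ _ hax))
  · rw [hu]; exact fun h => hax.ne (List.cons.inj h).1
  · rw [hv]; exact fun h => hcy.ne' (List.cons.inj h).1

theorem cyclicSingular.isChain {w : List A} (hs : cyclicSingular w) {a c : A} {m : List A}
    (hrot : w.IsRotated (a :: m ++ [c])) :
    (a :: m ++ [c]).IsChain fun x y => x ≤ a ∨ y ≤ c := by
  rw [List.isChain_iff_forall_rel_of_append_cons_cons]
  intro x y l₁ l₂ hsplit
  by_contra! ⟨hax, hcy⟩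
  obtain ⟨l₂, rfl⟩ : ∃ l₂', l₂ = l₂' ++ [c] := by
    rcases l₂.eq_nil_or_concat' with rfl | ⟨l₂', z, rfl⟩
    · rw [show l₁ ++ [x, y] = l₁ ++ [x] ++ [y] by simp, List.append_singleton_inj] at hsplit
      exact absurd hsplit.2 hcy.ne
    · rw [show l₁ ++ x :: y :: (l₂' ++ [z]) = l₁ ++ x :: y :: l₂' ++ [z] by simp,
        List.append_singleton_inj] at hsplit
      exact ⟨l₂', by rw [hsplit.2]⟩
  obtain ⟨l₁, rfl⟩ : ∃ l₁', l₁ = a :: l₁' := by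
    cases l₁ with
    | nil => simp_all
    | cons z l₁' => exact ⟨l₁', by simp_all⟩
  refine hs.not_isRotated l₁ l₂ hax hcy ?_
  rw [hsplit] at hrot
  simpa using hrot

end CyclicWords

theorem stmt14 {A : Type*} [LinearOrder A] [Fintype A] (w : List A) (b : A)
    (hs : cyclicSingular w) (hδ : 0 < deltaW w b)
    (d d' : A) (hd : d ≤ b) (hd' : d' ≤ b) (hne : ¬ (d = b ∧ d' = b)) :
    ¬ isCFactor [d, d'] w := by
  intro hfac
  obtain ⟨m, hrot⟩ := exists_isRotated_of_isCFactor_pair hfac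
  have hchain := hs.isChain hrot
  rw [deltaW_eq_countP_sub_countP, hrot.perm.countP_eq, hrot.perm.countP_eq] at hδ
  rcases hd.lt_or_eq with hdb | hdb
  · have := List.countP_le_countP_of_isChain (p := (b < ·)) (q := (· < b))
      (hchain.imp fun x y hxy hx => by grind) (by rw [List.getLast?_concat]; simpa using hd)
    omega
  · have hd'b : d' < b := lt_of_le_of_ne hd' fun h => hne ⟨hdb, h⟩
    have := List.countP_le_countP_of_isChain_flip (p := (b < ·)) (q := (· < b))
      (hchain.imp fun x y hxy hy => by grind) (by simpa using hd')
    omega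
end
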